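/- The ruler sequence is squarefree in the combinatorial sense: for all positive integers i and L, there exists j with 0 ≤ j < L such that a(i + j) ≠ a(i + L + j); i.e., the sequence contains no two identical consecutive blocks. -/

import Mathlib

def ruler (n : ℕ) : ℕ := padicValNat 2 (2 * n)

/-!
Write `L = 2 ^ k * r` with `r` odd and pick `n` among the first `2 ^ k ≤ L` terms of the block
with `2 ^ k ∣ n`, say `n = 2 ^ k * q`. Then `n + L = 2 ^ k * (q + r)`, and exactly one of `q`,
`q + r` is odd: that term has ruler value exactly `k + 1`, while the other is divisible by
`2 ^ (k + 1)`, so its ruler value is at least `k + 2` (or `0`, since `ruler 0 = 0`).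
-/

lemma Nat.exists_lt_dvd_add (i : ℕ) {d : ℕ} (hd : 0 < d) : ∃ j < d, d ∣ i + j :=
  ⟨d - 1 - (i + (d - 1)) % d, by omega, by
    have hmod := Nat.mod_lt (i + (d - 1)) hd
    convert Nat.dvd_sub_mod (n := d) (i + (d - 1)) using 1
    omega⟩

lemma ruler_two_pow_mul_odd (k : ℕ) {r : ℕ} (hr : Odd r) : ruler (2 ^ k * r) = k + 1 := by
  rw [ruler, ← mul_assoc, ← pow_succ', padicValNat.mul (by positivity) hr.pos.ne',
    padicValNat.prime_pow, padicValNat.eq_zero_of_not_dvd hr.not_two_dvd_nat, add_zero]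

lemma ruler_ne_of_two_pow_succ_dvd {k m : ℕ} (h : 2 ^ (k + 1) ∣ m) : ruler m ≠ k + 1 := by
  rcases eq_or_ne m 0 with rfl | hm
  · simp [ruler]
  · have : 2 ^ (k + 2) ∣ 2 * m := by rw [pow_succ']; exact mul_dvd_mul_left 2 h
    rw [padicValNat_dvd_iff_le (by positivity)] at this
    exact (Nat.lt_of_succ_le this).ne'

lemma ruler_ne_ruler_add_two_pow_mul_odd {k n r : ℕ} (hr : Odd r) (h : 2 ^ k ∣ n) :
    ruler n ≠ ruler (n + 2 ^ k * r) := by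
  obtain ⟨q, rfl⟩ := h
  rw [← mul_add]
  rcases Nat.even_or_odd q with ⟨t, rfl⟩ | hq
  · rw [ruler_two_pow_mul_odd k (r := t + t + r) (Even.add_odd ⟨t, rfl⟩ hr)]
    exact ruler_ne_of_two_pow_succ_dvd ⟨t, by ring⟩
  · obtain ⟨s, hs⟩ := hq.add_odd hr
    rw [ruler_two_pow_mul_odd k hq]
    exact (ruler_ne_of_two_pow_succ_dvd ⟨s, by rw [hs]; ring⟩).symm

theorem ruler_squarefree_general (i L : ℕ) (hL : 0 < L) :
    ∃ j : ℕ, j < L ∧ ruler (i + j) ≠ ruler (i + L + j) := by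
  obtain ⟨k, r, hr, rfl⟩ := Nat.exists_eq_two_pow_mul_odd hL.ne'
  obtain ⟨j, hj, hdvd⟩ := Nat.exists_lt_dvd_add i (pow_pos two_pos k)
  refine ⟨j, hj.trans_le (Nat.le_mul_of_pos_right _ hr.pos), ?_⟩
  rw [add_right_comm]
  exact ruler_ne_ruler_add_two_pow_mul_odd hr hdvd

theorem ruler_squarefree (i L : ℕ) (hi : 0 < i) (hL : 0 < L) :
    ∃ j : ℕ, j < L ∧ ruler (i + j) ≠ ruler (i + L + j) :=
  ruler_squarefree_general i L hL
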